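/- arXiv:2407.02618 — 10 statements merged into one kernel-verified Lean document; each statement's English description precedes it below -/
import Mathlib

section
/- For lsc submeasures φ_1 and φ_2, the inclusion Exh(φ_1) ⊆ Fin(φ_2) holds if and only if there exists M > 0 such that every finite set F ⊆ ℕ satisfies φ_1(F) > 1/M or φ_2(F) < M. -/
open Filter Topology ENNReal

/-- A submeasure on `ℕ`: vanishes on `∅`, finite on singletons, monotone and subadditive. -/
def IsSubmeasure (φ : Set ℕ → ℝ≥0∞) : Prop :=
  φ ∅ = 0 ∧ (∀ n : ℕ, φ {n} < ⊤) ∧ (∀ C D : Set ℕ, C ⊆ D → φ C ≤ φ D) ∧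
    (∀ C D : Set ℕ, φ (C ∪ D) ≤ φ C + φ D)

/-- Lower semicontinuity: `φ(C) = lim_n φ(C ∩ {0,…,n-1})`. -/
def IsLSC (φ : Set ℕ → ℝ≥0∞) : Prop :=
  ∀ C : Set ℕ, Tendsto (fun n : ℕ => φ (C ∩ Set.Iio n)) atTop (𝓝 (φ C))

/-- The family of (atomic) measures dominated by `φ`. -/
def Meas (φ : Set ℕ → ℝ≥0∞) : Set (ℕ → ℝ≥0∞) :=
  {m | ∀ C : Set ℕ, ∑' n : C, m n ≤ φ C}

/-- `φ` is non-pathological if it is the supremum of the measures below it. -/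
def NonPathological (φ : Set ℕ → ℝ≥0∞) : Prop :=
  ∀ C : Set ℕ, φ C = ⨆ m ∈ Meas φ, ∑' n : C, m n

/-- The extension `φ̂` of `φ` to real sequences. -/
noncomputable def hatPhi (φ : Set ℕ → ℝ≥0∞) (x : ℕ → ℝ) : ℝ≥0∞ :=
  ⨆ m ∈ Meas φ, ∑' n, m n * ENNReal.ofReal |x n|

/-- `Fin(φ)`, the sets of finite submeasure. -/
def FinIdeal (φ : Set ℕ → ℝ≥0∞) : Set (Set ℕ) := {C | φ C < ⊤}

/-- `Exh(φ)`, the exhaustive sets. -/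
def ExhIdeal (φ : Set ℕ → ℝ≥0∞) : Set (Set ℕ) :=
  {C | Tendsto (fun n : ℕ => φ (C \ Set.Iio n)) atTop (𝓝 0)}

/-- `FIN(φ)`, the sequences with finite `φ̂`-norm. -/
def FINspace (φ : Set ℕ → ℝ≥0∞) : Set (ℕ → ℝ) := {x | hatPhi φ x < ⊤}

/-- `EXH(φ)`. -/
def EXHspace (φ : Set ℕ → ℝ≥0∞) : Set (ℕ → ℝ) :=
  {x | Tendsto (fun n : ℕ => hatPhi φ (Set.indicator (Set.Ici n) x)) atTop (𝓝 0)}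

/-- `Mon`: sequences nonincreasing in absolute value. -/
def Mon : Set (ℕ → ℝ) := {x | ∀ n, |x (n + 1)| ≤ |x n|}


lemma submeasure_finite_lt_top (φ : Set ℕ → ℝ≥0∞) (hφ : IsSubmeasure φ)
    {F : Set ℕ} (hF : F.Finite) : φ F < ⊤ := by
  refine Set.Finite.induction_on (motive := fun s _ => φ s < ⊤) F hF ?_ ?_
  · simp only [hφ.1]; exact ENNReal.zero_lt_top
  · intro a s _ hs ih
    have h1 : φ (insert a s) ≤ φ {a} + φ s := by
      rw [Set.insert_eq]; exact hφ.2.2.2 {a} s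
    exact h1.trans_lt (ENNReal.add_lt_top.mpr ⟨hφ.2.1 a, ih⟩)

lemma submeasure_biUnion (φ : Set ℕ → ℝ≥0∞) (hφ : IsSubmeasure φ)
    (G : ℕ → Set ℕ) (J : ℕ) :
    φ (⋃ k, ⋃ (_ : k < J), G k) ≤ ∑ k ∈ Finset.range J, φ (G k) := by
  induction J with
  | zero => simp [hφ.1]
  | succ J ih =>
      rw [Set.biUnion_lt_succ, Finset.sum_range_succ]
      exact (hφ.2.2.2 _ _).trans (add_le_add_left ih _)

lemma submeasure_iUnion (φ : Set ℕ → ℝ≥0∞) (hφ : IsSubmeasure φ) (hlsc : IsLSC φ)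
    (G : ℕ → Set ℕ) : φ (⋃ k, G k) ≤ ∑' k, φ (G k) := by
  refine le_of_tendsto (hlsc (⋃ k, G k)) (Filter.Eventually.of_forall fun n => ?_)
  -- the finite set (⋃ G) ∩ Iio n is covered by finitely many G k
  classical
  set S : Set ℕ := (⋃ k, G k) ∩ Set.Iio n with hS
  have hfn : ∀ x ∈ S, ∃ k, x ∈ G k := fun x hx => Set.mem_iUnion.mp hx.1
  choose! f hf using hfn
  set J : ℕ := (Finset.range n).sup f + 1 with hJ
  have hsub : S ⊆ ⋃ k, ⋃ (_ : k < J), G k := by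
    intro x hx
    refine Set.mem_iUnion.mpr ⟨f x, Set.mem_iUnion.mpr ⟨?_, hf x hx⟩⟩
    have hxn : x ∈ Finset.range n := Finset.mem_range.mpr hx.2
    exact Nat.lt_succ_of_le (Finset.le_sup hxn)
  calc φ S ≤ φ (⋃ k, ⋃ (_ : k < J), G k) := hφ.2.2.1 _ _ hsub
    _ ≤ ∑ k ∈ Finset.range J, φ (G k) := submeasure_biUnion φ hφ G J
    _ ≤ ∑' k, φ (G k) := ENNReal.sum_le_tsum _
/-- `Exh(φ₁) ⊆ Fin(φ₂)` iff there is `M > 0` such that every finite set `F` satisfies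
`φ₁(F) > 1/M` or `φ₂(F) < M`. -/
theorem Exh_subset_Fin_iff (φ₁ φ₂ : Set ℕ → ℝ≥0∞)
    (hφ₁ : IsSubmeasure φ₁) (hlsc₁ : IsLSC φ₁)
    (hφ₂ : IsSubmeasure φ₂) (hlsc₂ : IsLSC φ₂) :
    ExhIdeal φ₁ ⊆ FinIdeal φ₂ ↔
      ∃ M : ℝ≥0∞, 0 < M ∧ M ≠ ⊤ ∧
        ∀ F : Set ℕ, F.Finite → (M⁻¹ < φ₁ F ∨ φ₂ F < M) := by
  constructor
  · intro hsub
    by_contra hno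
    push_neg at hno
    -- for each k, get a finite F k with φ₁ (F k) ≤ 2⁻¹ ^ (k+1) and 2 ^ (k+1) ≤ φ₂ (F k)
    have hex : ∀ k : ℕ, ∃ F : Set ℕ, F.Finite ∧ φ₁ F ≤ 2⁻¹ ^ (k + 1) ∧
        (2 : ℝ≥0∞) ^ (k + 1) ≤ φ₂ F := by
      intro k
      have hM : (0 : ℝ≥0∞) < 2 ^ (k + 1) := by positivity
      have hM' : (2 : ℝ≥0∞) ^ (k + 1) ≠ ⊤ := by
        exact ENNReal.pow_ne_top (by norm_num)
      obtain ⟨F, hF, h1, h2⟩ := hno (2 ^ (k + 1)) hM hM'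
      refine ⟨F, hF, ?_, h2⟩
      rwa [ENNReal.inv_pow] at h1
    choose F hFfin hF1 hF2 using hex
    set C : Set ℕ := ⋃ k, F k with hC
    -- C ∈ ExhIdeal φ₁
    have hCexh : C ∈ ExhIdeal φ₁ := by
      rw [ExhIdeal, Set.mem_setOf_eq, ENNReal.tendsto_atTop_zero]
      intro ε hε
      obtain ⟨K, hK⟩ := ENNReal.exists_inv_two_pow_lt hε.ne'
      -- the finitely many sets F 0, ..., F K are all bounded
      have hbound : ∃ N : ℕ, ∀ k ≤ K, F k ⊆ Set.Iio N := by
        have : (⋃ k, ⋃ (_ : k ≤ K), F k).Finite := by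
          apply Set.Finite.biUnion (Set.finite_Iic K)
          intro k _; exact hFfin k
        obtain ⟨N, hN⟩ := this.bddAbove
        refine ⟨N + 1, fun k hk x hx => ?_⟩
        have : x ≤ N := hN (Set.mem_biUnion hk hx)
        exact Nat.lt_succ_of_le this
      obtain ⟨N, hN⟩ := hbound
      refine ⟨N, fun n hn => ?_⟩
      -- C \ Iio n ⊆ ⋃ j, F (j + K + 1)
      have hsub2 : C \ Set.Iio n ⊆ ⋃ j, F (j + K + 1) := by
        rintro x ⟨hx, hx2⟩
        obtain ⟨k, hk⟩ := Set.mem_iUnion.mp hx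
        rcases le_or_gt k K with h | h
        · exact absurd (Set.Iio_subset_Iio hn (hN k h hk)) hx2
        · exact Set.mem_iUnion.mpr ⟨k - K - 1, by
            have : k - K - 1 + K + 1 = k := by omega
            rwa [this]⟩
      calc φ₁ (C \ Set.Iio n) ≤ φ₁ (⋃ j, F (j + K + 1)) := hφ₁.2.2.1 _ _ hsub2
        _ ≤ ∑' j, φ₁ (F (j + K + 1)) := submeasure_iUnion φ₁ hφ₁ hlsc₁ _
        _ ≤ ∑' j : ℕ, 2⁻¹ ^ (j + K + 1 + 1) := ENNReal.tsum_le_tsum fun j => hF1 _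
        _ = ∑' j : ℕ, 2⁻¹ ^ j * 2⁻¹ ^ (K + 2) := by
            refine tsum_congr fun j => ?_
            rw [← pow_add]
            congr 1
        _ = (1 - 2⁻¹)⁻¹ * 2⁻¹ ^ (K + 2) := by
            rw [ENNReal.tsum_mul_right, ENNReal.tsum_geometric]
        _ = 2⁻¹ ^ (K + 1) := by
            rw [ENNReal.one_sub_inv_two, inv_inv, pow_succ', ← mul_assoc,
              ENNReal.mul_inv_cancel two_ne_zero (by norm_num), one_mul]
        _ ≤ 2⁻¹ ^ K :=
            pow_le_pow_of_le_one zero_le (ENNReal.inv_le_one.mpr one_le_two) (Nat.le_succ K)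
        _ ≤ ε := hK.le
    -- but φ₂ C = ⊤
    have hCtop : φ₂ C = ⊤ := by
      by_contra h
      obtain ⟨n, hn⟩ := ENNReal.exists_nat_gt h
      have h1 : (n : ℝ≥0∞) ≤ 2 ^ (n + 1) := by
        calc (n : ℝ≥0∞) ≤ 2 ^ n := by
              exact_mod_cast (Nat.lt_two_pow_self (n := n)).le
          _ ≤ 2 ^ (n + 1) := by gcongr <;> norm_num
      have h2 : (2 : ℝ≥0∞) ^ (n + 1) ≤ φ₂ C :=
        (hF2 n).trans (hφ₂.2.2.1 _ _ (Set.subset_iUnion F n))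
      exact absurd (hn.trans_le (h1.trans h2)) (lt_irrefl _)
    exact absurd (hsub hCexh) (by simp [FinIdeal, hCtop])
  · rintro ⟨M, hM0, hMtop, hM⟩ C hC
    -- pick N with φ₁ (C \ Iio N) ≤ M⁻¹
    obtain ⟨N, hN⟩ := (ENNReal.tendsto_atTop_zero.mp hC) M⁻¹
      (ENNReal.inv_pos.mpr hMtop)
    have hNN := hN N le_rfl
    -- every finite subset of C \ Iio N has φ₂ < M
    have htail : φ₂ (C \ Set.Iio N) ≤ M := by
      refine le_of_tendsto (hlsc₂ (C \ Set.Iio N)) (Filter.Eventually.of_forall fun m => ?_)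
      set S := (C \ Set.Iio N) ∩ Set.Iio m with hS
      have hSfin : S.Finite := (Set.finite_Iio m).subset Set.inter_subset_right
      have hS1 : φ₁ S ≤ M⁻¹ := (hφ₁.2.2.1 _ _ Set.inter_subset_left).trans hNN
      rcases hM S hSfin with h | h
      · exact absurd hS1 h.not_ge
      · exact h.le
    have hhead : φ₂ (C ∩ Set.Iio N) < ⊤ :=
      submeasure_finite_lt_top φ₂ hφ₂ ((Set.finite_Iio N).subset Set.inter_subset_right)
    have : φ₂ C ≤ φ₂ (C ∩ Set.Iio N) + φ₂ (C \ Set.Iio N) := by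
      have := hφ₂.2.2.2 (C ∩ Set.Iio N) (C \ Set.Iio N)
      rwa [Set.inter_union_diff] at this
    exact this.trans_lt (ENNReal.add_lt_top.mpr ⟨hhead, htail.trans_lt hMtop.lt_top⟩)
end

section
/- Let φ and ψ be non-pathological lsc submeasures. If there exists M > 0 such that |φ(A) − ψ(A)| ≤ M for all A ⊆ ℕ, then a bounded function x : [0,1] → ℝ has bounded φ-variation if and only if it has bounded ψ-variation, i.e., BV(φ) = BV(ψ). -/
open Filter Topology ENNReal

/-- A sequence of nonoverlapping (possibly degenerate) closed subintervals of `[0,1]`,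
encoded by endpoint pairs. -/
def NonOverlapping (J : ℕ → ℝ × ℝ) : Prop :=
  (∀ n, 0 ≤ (J n).1 ∧ (J n).1 ≤ (J n).2 ∧ (J n).2 ≤ 1) ∧
    Pairwise fun n m => Disjoint (Set.Ioo (J n).1 (J n).2) (Set.Ioo (J m).1 (J m).2)

/-- The `φ`-variation of `x : [0,1] → ℝ`: `sup_J φ̂(x(J))`. -/
noncomputable def varPhi (φ : Set ℕ → ℝ≥0∞) (x : ℝ → ℝ) : ℝ≥0∞ :=
  ⨆ (J : ℕ → ℝ × ℝ) (_ : NonOverlapping J),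
    hatPhi φ (fun n => |x (J n).2 - x (J n).1|)

section Auxiliary

/-- Key decomposition lemma: if a (finitely additive, atomic) "measure" `m` is dominated
by `max (ψ ·) M` on every set, then its pairing with any sequence `w` bounded by `B` is at
most `(⨆ μ ∈ Meas ψ, pairing) + M * B`.  Proof: on every finite set, remove from `m` a
maximal "violated" subset (which carries mass at most `M`); the rest lies in `Meas ψ`. -/
lemma key_decomp (ψ : Set ℕ → ℝ≥0∞) (h0 : ψ ∅ = 0)
    (hmono : ∀ C D : Set ℕ, C ⊆ D → ψ C ≤ ψ D)
    (hsub : ∀ C D : Set ℕ, ψ (C ∪ D) ≤ ψ C + ψ D)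
    (M B : ℝ≥0∞) (hMtop : M ≠ ⊤)
    (m w : ℕ → ℝ≥0∞) (hw : ∀ n, w n ≤ B)
    (hm : ∀ C : Set ℕ, (∑' n : C, m n) ≤ max (ψ C) M) :
    ∑' n, m n * w n ≤ (⨆ μ ∈ Meas ψ, ∑' n, μ n * w n) + M * B := by
  classical
  rw [ENNReal.tsum_eq_iSup_sum]
  refine iSup_le fun F => ?_
  have hmF : ∀ A : Finset ℕ, (∑ n ∈ A, m n) ≤ max (ψ ↑A) M := by
    intro A
    have h := hm (↑A : Set ℕ)
    rwa [Finset.tsum_subtype'] at h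
  set P : Finset ℕ → Prop := fun A => ψ ↑A < ∑ n ∈ A, m n with hPdef
  have hPM : ∀ A : Finset ℕ, P A → (∑ n ∈ A, m n) ≤ M := by
    intro A hA
    rcases le_total (ψ ↑A) M with h | h
    · simpa [max_eq_right h] using hmF A
    · exact absurd (lt_of_lt_of_le hA (by simpa [max_eq_left h] using hmF A)) (lt_irrefl _)
  set 𝒜 : Finset (Finset ℕ) := insert ∅ ((F.powerset).filter P) with h𝒜
  obtain ⟨A, hA𝒜, hAmax⟩ :=
    Finset.exists_max_image 𝒜 (fun A => ∑ n ∈ A, m n) ⟨∅, Finset.mem_insert_self _ _⟩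
  have hAF : A ⊆ F := by
    rcases Finset.mem_insert.1 hA𝒜 with h | h
    · simp [h]
    · exact Finset.mem_powerset.1 (Finset.mem_filter.1 h).1
  have hψA : ψ ↑A ≤ ∑ n ∈ A, m n := by
    rcases Finset.mem_insert.1 hA𝒜 with h | h
    · subst h; simp [h0]
    · exact le_of_lt (Finset.mem_filter.1 h).2
  have hAM : (∑ n ∈ A, m n) ≤ M := by
    rcases Finset.mem_insert.1 hA𝒜 with h | h
    · subst h; simp
    · exact hPM A (Finset.mem_filter.1 h).2
  have hAtop : (∑ n ∈ A, m n) ≠ ⊤ := (lt_of_le_of_lt hAM hMtop.lt_top).ne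
  set ν : ℕ → ℝ≥0∞ := fun n => if n ∈ F \ A then m n else 0 with hνdef
  have hν : ν ∈ Meas ψ := by
    intro C
    set C' : Finset ℕ := (F \ A).filter (fun n => n ∈ C) with hC'def
    have hnotP : ¬ P C' := by
      intro hP
      have hC'pos : (0:ℝ≥0∞) < ∑ n ∈ C', m n := lt_of_le_of_lt zero_le hP
      have hdisj : Disjoint A C' := by
        refine Finset.disjoint_left.2 fun n hnA hnC' => ?_
        exact (Finset.mem_sdiff.1 (Finset.mem_filter.1 hnC').1).2 hnA
      have hunion : P (A ∪ C') := by
        have h1 : ψ ↑(A ∪ C') ≤ ψ ↑A + ψ ↑C' := by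
          have hcoe : (↑(A ∪ C') : Set ℕ) = (↑A : Set ℕ) ∪ ↑C' := by simp
          rw [hcoe]; exact hsub _ _
        have h2 : ψ ↑A + ψ ↑C' < (∑ n ∈ A, m n) + ∑ n ∈ C', m n :=
          ENNReal.add_lt_add_of_le_of_lt
            (lt_of_le_of_lt (le_trans hψA hAM) hMtop.lt_top).ne hψA hP
        have h3 : (∑ n ∈ A ∪ C', m n) = (∑ n ∈ A, m n) + ∑ n ∈ C', m n :=
          Finset.sum_union hdisj
        show ψ ↑(A ∪ C') < ∑ n ∈ A ∪ C', m n
        rw [h3]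
        exact lt_of_le_of_lt h1 h2
      have hmem : A ∪ C' ∈ 𝒜 := by
        refine Finset.mem_insert_of_mem (Finset.mem_filter.2 ⟨Finset.mem_powerset.2 ?_, hunion⟩)
        refine Finset.union_subset hAF (le_trans (Finset.filter_subset _ _) ?_)
        exact Finset.sdiff_subset
      have hle := hAmax _ hmem
      rw [Finset.sum_union hdisj] at hle
      exact absurd hle (not_le.2 (ENNReal.lt_add_right hAtop hC'pos.ne'))
    have hsum : (∑' n : C, ν n) ≤ ∑ n ∈ C', m n := by
      rw [tsum_subtype]
      have hle : ∀ n, Set.indicator C ν n ≤ Set.indicator (↑C' : Set ℕ) m n := by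
        intro n
        by_cases hc : n ∈ C <;> by_cases hfa : n ∈ F \ A <;>
          simp [Set.indicator, hc, hfa, hνdef, hC'def]
      calc ∑' n, Set.indicator C ν n
          ≤ ∑' n, Set.indicator (↑C' : Set ℕ) m n := ENNReal.tsum_le_tsum hle
        _ = ∑' n : (↑C' : Set ℕ), m n := (tsum_subtype _ _).symm
        _ = ∑ n ∈ C', m n := Finset.tsum_subtype' _ _
    have hC'C : (↑C' : Set ℕ) ⊆ C := by
      intro n hn
      exact (Finset.mem_filter.1 hn).2
    exact le_trans hsum (le_trans (not_lt.1 hnotP) (hmono _ _ hC'C))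
  have hsplit : (∑ n ∈ F, m n * w n) = (∑ n ∈ F \ A, m n * w n) + ∑ n ∈ A, m n * w n :=
    (Finset.sum_sdiff hAF).symm
  have h1 : (∑ n ∈ F \ A, m n * w n) ≤ ⨆ μ ∈ Meas ψ, ∑' n, μ n * w n := by
    have heq : (∑' n, ν n * w n) = ∑ n ∈ F \ A, m n * w n := by
      rw [tsum_eq_sum (s := F \ A) (f := fun n => ν n * w n)
        (fun b hb => by simp only [hνdef]; rw [if_neg hb, zero_mul])]
      exact Finset.sum_congr rfl fun n hn => by simp only [hνdef]; rw [if_pos hn]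
    rw [← heq]
    exact le_iSup₂ (f := fun μ (_ : μ ∈ Meas ψ) => ∑' n, μ n * w n) ν hν
  have h2 : (∑ n ∈ A, m n * w n) ≤ M * B := by
    calc (∑ n ∈ A, m n * w n) ≤ ∑ n ∈ A, m n * B :=
          Finset.sum_le_sum fun n _ => mul_le_mul_right (hw n) _
      _ = (∑ n ∈ A, m n) * B := by rw [Finset.sum_mul]
      _ ≤ M * B := mul_le_mul_left hAM _
  rw [hsplit]
  exact add_le_add h1 h2

/-- Comparison of the extensions: if `φ ≤ ψ + M` then `φ̂ ≤ 2 ψ̂ + 2 M B` on sequences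
bounded by `B`. -/
lemma hatPhi_le_hatPhi (φ ψ : Set ℕ → ℝ≥0∞) (hψ : IsSubmeasure ψ)
    (M B : ℝ≥0∞) (hMtop : M ≠ ⊤) (hclose : ∀ A : Set ℕ, φ A ≤ ψ A + M)
    (x : ℕ → ℝ) (hw : ∀ n, ENNReal.ofReal |x n| ≤ B) :
    hatPhi φ x ≤ 2 * hatPhi ψ x + 2 * (M * B) := by
  obtain ⟨h0, hsing, hmono, hsub⟩ := hψ
  refine iSup₂_le fun m hm => ?_
  set m' : ℕ → ℝ≥0∞ := fun n => m n * 2⁻¹ with hm'def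
  have h22 : (2:ℝ≥0∞) * 2⁻¹ = 1 := ENNReal.mul_inv_cancel two_ne_zero ENNReal.ofNat_ne_top
  have hm' : ∀ C : Set ℕ, (∑' n : C, m' n) ≤ max (ψ C) M := by
    intro C
    have ht : (∑' n : C, m' n) = (∑' n : C, m n) * 2⁻¹ := ENNReal.tsum_mul_right
    rw [ht]
    have h1 : (∑' n : C, m n) ≤ ψ C + M := le_trans (hm C) (hclose C)
    have h3 : ψ C + M ≤ max (ψ C) M * 2 := by
      rw [mul_two]; exact add_le_add (le_max_left _ _) (le_max_right _ _)
    calc (∑' n : C, m n) * 2⁻¹ ≤ (max (ψ C) M * 2) * 2⁻¹ :=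
          mul_le_mul_left (le_trans h1 h3) _
      _ = max (ψ C) M := by rw [mul_assoc, h22, mul_one]
  have hkey := key_decomp ψ h0 hmono hsub M B hMtop m'
    (fun n => ENNReal.ofReal |x n|) hw hm'
  have hrw : (∑' n, m n * ENNReal.ofReal |x n|)
      = 2 * ∑' n, m' n * ENNReal.ofReal |x n| := by
    rw [← ENNReal.tsum_mul_left]
    refine tsum_congr fun n => ?_
    rw [hm'def]
    rw [show (2:ℝ≥0∞) * (m n * 2⁻¹ * ENNReal.ofReal |x n|)
        = (2 * 2⁻¹) * (m n * ENNReal.ofReal |x n|) by ring, h22, one_mul]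
  rw [hrw]
  calc 2 * (∑' n, m' n * ENNReal.ofReal |x n|)
      ≤ 2 * ((⨆ μ ∈ Meas ψ, ∑' n, μ n * ENNReal.ofReal |x n|) + M * B) :=
        mul_le_mul_right hkey 2
    _ = 2 * hatPhi ψ x + 2 * (M * B) := by rw [mul_add]; rfl

/-- One-sided comparison of variations. -/
lemma varPhi_le_varPhi (φ ψ : Set ℕ → ℝ≥0∞) (hψ : IsSubmeasure ψ)
    (M : ℝ≥0∞) (hMtop : M ≠ ⊤) (hclose : ∀ A : Set ℕ, φ A ≤ ψ A + M)
    (x : ℝ → ℝ) (N : ℝ) (hN : ∀ t ∈ Set.Icc (0:ℝ) 1, |x t| ≤ N) :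
    varPhi φ x ≤ 2 * varPhi ψ x + 2 * (M * ENNReal.ofReal (N + N)) := by
  refine iSup₂_le fun J hJ => ?_
  have hb : ∀ n, ENNReal.ofReal |(|x (J n).2 - x (J n).1|)| ≤ ENNReal.ofReal (N + N) := by
    intro n
    obtain ⟨h1, h2, h3⟩ := hJ.1 n
    have hm1 : (J n).1 ∈ Set.Icc (0:ℝ) 1 := ⟨h1, le_trans h2 h3⟩
    have hm2 : (J n).2 ∈ Set.Icc (0:ℝ) 1 := ⟨le_trans h1 h2, h3⟩
    refine ENNReal.ofReal_le_ofReal ?_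
    rw [abs_abs]
    calc |x (J n).2 - x (J n).1| ≤ |x (J n).2| + |x (J n).1| := by
          rw [sub_eq_add_neg]
          refine le_trans (abs_add_le _ _) ?_
          rw [abs_neg]
      _ ≤ N + N := add_le_add (hN _ hm2) (hN _ hm1)
  calc hatPhi φ (fun n => |x (J n).2 - x (J n).1|)
      ≤ 2 * hatPhi ψ (fun n => |x (J n).2 - x (J n).1|)
          + 2 * (M * ENNReal.ofReal (N + N)) :=
        hatPhi_le_hatPhi φ ψ hψ M (ENNReal.ofReal (N + N)) hMtop hclose _ hb
    _ ≤ 2 * varPhi ψ x + 2 * (M * ENNReal.ofReal (N + N)) := by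
        refine add_le_add_left (mul_le_mul_right ?_ 2) _
        exact le_iSup₂ (f := fun J (_ : NonOverlapping J) =>
          hatPhi ψ fun n => |x (J n).2 - x (J n).1|) J hJ

end Auxiliary

/-- If two non-pathological lsc submeasures differ by at most a constant `M`, then they
give the same space of functions of bounded variation. -/
theorem BV_eq_of_close (φ ψ : Set ℕ → ℝ≥0∞)
    (hφ : IsSubmeasure φ) (hlscφ : IsLSC φ) (hnpφ : NonPathological φ)
    (hψ : IsSubmeasure ψ) (hlscψ : IsLSC ψ) (hnpψ : NonPathological ψ)
    (M : ℝ≥0∞) (hM : 0 < M) (hMtop : M ≠ ⊤)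
    (hclose : ∀ A : Set ℕ, φ A ≤ ψ A + M ∧ ψ A ≤ φ A + M) :
    ∀ x : ℝ → ℝ, (∃ N : ℝ, ∀ t ∈ Set.Icc (0:ℝ) 1, |x t| ≤ N) →
      (varPhi φ x < ⊤ ↔ varPhi ψ x < ⊤) := by
  intro x hx
  obtain ⟨N, hN⟩ := hx
  have hfin : ∀ χ : Set ℕ → ℝ≥0∞, varPhi χ x < ⊤ →
      2 * varPhi χ x + 2 * (M * ENNReal.ofReal (N + N)) < ⊤ := by
    intro χ hχ
    refine ENNReal.add_lt_top.2 ⟨?_, ?_⟩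
    · exact ENNReal.mul_lt_top (lt_top_iff_ne_top.1 (by simp [ENNReal.ofNat_ne_top] : (2:ℝ≥0∞) < ⊤)).lt_top hχ
    · exact ENNReal.mul_lt_top (by simp [ENNReal.ofNat_ne_top] : (2:ℝ≥0∞) < ⊤)
        (ENNReal.mul_lt_top hMtop.lt_top ENNReal.ofReal_lt_top)
  constructor
  · intro h
    exact lt_of_le_of_lt
      (varPhi_le_varPhi ψ φ hφ M hMtop (fun A => (hclose A).2) x N hN) (hfin φ h)
  · intro h
    exact lt_of_le_of_lt
      (varPhi_le_varPhi φ ψ hψ M hMtop (fun A => (hclose A).1) x N hN) (hfin ψ h)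
end

section
/- Let φ be a non-pathological lsc submeasure such that the sequence (φ({k}))_k is unbounded. Then BV(φ) contains only the constant functions. -/
open Filter Topology ENNReal

/-- If the sequence `(φ({k}))` is unbounded, then `BV(φ)` contains only constant
functions (on `[0,1]`). -/
theorem BV_constant_of_unbounded_singletons (φ : Set ℕ → ℝ≥0∞)
    (hφ : IsSubmeasure φ) (hlsc : IsLSC φ) (hnp : NonPathological φ)
    (hunb : ∀ B : ℝ≥0∞, B < ⊤ → ∃ k : ℕ, B < φ {k}) :
    ∀ x : ℝ → ℝ, (∃ N : ℝ, ∀ t ∈ Set.Icc (0:ℝ) 1, |x t| ≤ N) → varPhi φ x < ⊤ →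
      ∀ s ∈ Set.Icc (0:ℝ) 1, ∀ t ∈ Set.Icc (0:ℝ) 1, x s = x t := by
  intro x _hbdd hvar s hs t ht
  by_contra hne
  set c : ℝ := |x t - x s| with hc
  have hcpos : 0 < c := abs_pos.mpr (sub_ne_zero.mpr (fun h => hne h.symm))
  obtain ⟨a, b, ha, hab, hb, hcc⟩ : ∃ a b : ℝ, 0 ≤ a ∧ a ≤ b ∧ b ≤ 1 ∧ |x b - x a| = c := by
    rcases le_total s t with h | h
    · exact ⟨s, t, hs.1, h, ht.2, rfl⟩
    · exact ⟨t, s, ht.1, h, hs.2, by rw [hc, abs_sub_comm]⟩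
  set d : ℝ≥0∞ := ENNReal.ofReal c with hdd
  have hd0 : d ≠ 0 := by simp [hdd, hcpos, ENNReal.ofReal_pos.mpr hcpos, ne_of_gt]
  have hdT : d ≠ ⊤ := ENNReal.ofReal_ne_top
  obtain ⟨k, hk⟩ := hunb (varPhi φ x / d) (ENNReal.div_lt_top hvar.ne hd0)
  set J : ℕ → ℝ × ℝ := fun n => if n = k then (a, b) else (a, a) with hJ
  have hNO : NonOverlapping J := by
    constructor
    · intro n
      by_cases h : n = k <;> simp [hJ, h, ha, hab, hb, le_trans ha hab, le_trans hab hb]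
    · intro n m hnm
      rcases ne_or_eq n k with h | h
      · have : Set.Ioo (J n).1 (J n).2 = ∅ := by simp [hJ, h]
        simp [this]
      · have hm : m ≠ k := by omega
        have : Set.Ioo (J m).1 (J m).2 = ∅ := by simp [hJ, hm]
        simp [this]
  have key : φ {k} * d ≤ varPhi φ x := by
    have h1 : φ {k} * d ≤ hatPhi φ (fun n => |x (J n).2 - x (J n).1|) := by
      rw [hnp {k}, hatPhi]
      simp only [ENNReal.iSup_mul]
      refine iSup₂_le fun m hm => le_iSup₂_of_le m hm ?_
      rw [tsum_singleton]
      have hkterm : m k * ENNReal.ofReal |(fun n => |x (J n).2 - x (J n).1|) k| ≤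
          ∑' n, m n * ENNReal.ofReal |(fun n => |x (J n).2 - x (J n).1|) n| :=
        ENNReal.le_tsum k
      refine le_trans (le_of_eq ?_) hkterm
      simp [hJ, hcc, hdd, abs_of_nonneg (le_of_lt hcpos)]
    refine h1.trans ?_
    exact le_iSup₂ (f := fun J (_ : NonOverlapping J) =>
      hatPhi φ (fun n => |x (J n).2 - x (J n).1|)) J hNO
  have hlt : varPhi φ x < φ {k} * d := by
    calc varPhi φ x = varPhi φ x / d * d := (ENNReal.div_mul_cancel hd0 hdT).symm
      _ < φ {k} * d := by
          rw [mul_comm _ d, mul_comm _ d]; exact ENNReal.mul_lt_mul_right hd0 hdT hk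
  exact absurd key (not_le.mpr hlt)
end

section
/- Let φ be a non-pathological lsc submeasure such that sup_k φ({k}) = M < ∞. Then every function x : [0,1] → ℝ of bounded Jordan variation belongs to BV(φ), and sup_J φ̂(x(J)) ≤ M·var(x). -/
open Filter Topology ENNReal

/-- The classical Jordan variation of `x` on `[0,1]`. -/
noncomputable def jordanVar (x : ℝ → ℝ) : ℝ≥0∞ :=
  ⨆ (n : ℕ) (t : ℕ → ℝ) (_ : Monotone t ∧ ∀ i, t i ∈ Set.Icc (0:ℝ) 1),
    ∑ i ∈ Finset.range n, ENNReal.ofReal |x (t (i + 1)) - x (t i)|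

/-- Sorted version: the sum over a sorted finite family of intervals is bounded by
the Jordan variation. -/
lemma sorted_sum_le_jordanVar (x : ℝ → ℝ) (k : ℕ) (a b : ℕ → ℝ)
    (hbound : ∀ i, i < k → 0 ≤ a i ∧ a i ≤ b i ∧ b i ≤ 1)
    (hsort : ∀ i, i + 1 < k → b i ≤ a (i + 1)) :
    ∑ i ∈ Finset.range k, ENNReal.ofReal |x (b i) - x (a i)| ≤ jordanVar x := by
  classical
  set t : ℕ → ℝ := fun j =>
    if j < 2 * k then (if j % 2 = 0 then a (j / 2) else b (j / 2)) else 1 with ht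
  have hta : ∀ i, i < k → t (2 * i) = a i := by
    intro i hi
    have h2 : 2 * i < 2 * k := by omega
    have hm : (2 * i) % 2 = 0 := by omega
    have hd : (2 * i) / 2 = i := by omega
    simp [ht, h2, hm, hd]
  have htb : ∀ i, i < k → t (2 * i + 1) = b i := by
    intro i hi
    have h2 : 2 * i + 1 < 2 * k := by omega
    have hm : (2 * i + 1) % 2 = 1 := by omega
    have hd : (2 * i + 1) / 2 = i := by omega
    simp [ht, h2, hm, hd]
  have hmem : ∀ j, t j ∈ Set.Icc (0 : ℝ) 1 := by
    intro j
    by_cases h2 : j < 2 * k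
    · have hj : j / 2 < k := by omega
      obtain ⟨h0, hab, hb1⟩ := hbound _ hj
      by_cases hp : j % 2 = 0
      · simp only [ht, h2, hp, if_true]
        exact ⟨h0, hab.trans hb1⟩
      · simp only [ht, h2, hp, if_true, if_false]
        exact ⟨h0.trans hab, hb1⟩
    · simp only [ht, h2, if_false]
      exact ⟨zero_le_one, le_refl 1⟩
  have hmono : Monotone t := by
    apply monotone_nat_of_le_succ
    intro j
    by_cases h2 : j + 1 < 2 * k
    · have hj2 : j < 2 * k := by omega
      have hj : j / 2 < k := by omega
      by_cases hp : j % 2 = 0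
      · have hm1 : (j + 1) % 2 = 1 := by omega
        have hd1 : (j + 1) / 2 = j / 2 := by omega
        simp only [ht, h2, hj2, hp, hm1, hd1, if_true, if_false,
          Nat.one_ne_zero]
        exact (hbound _ hj).2.1
      · have hm1 : (j + 1) % 2 = 0 := by omega
        have hd1 : (j + 1) / 2 = j / 2 + 1 := by omega
        have hlt : j / 2 + 1 < k := by omega
        simp only [ht, h2, hj2, hp, hm1, hd1, if_true, if_false]
        exact hsort _ hlt
    · by_cases hj2 : j < 2 * k
      · have hj : j / 2 < k := by omega
        obtain ⟨h0, hab, hb1⟩ := hbound _ hj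
        by_cases hp : j % 2 = 0
        · simp only [ht, h2, hj2, hp, if_true, if_false]
          exact hab.trans hb1
        · simp only [ht, h2, hj2, hp, if_true, if_false]
          exact hb1
      · have : ¬ j + 1 < 2 * k := by omega
        simp [ht, hj2, this]
  have hsum : ∑ i ∈ Finset.range k, ENNReal.ofReal |x (b i) - x (a i)|
      ≤ ∑ j ∈ Finset.range (2 * k), ENNReal.ofReal |x (t (j + 1)) - x (t j)| := by
    have heq : ∑ i ∈ Finset.range k, ENNReal.ofReal |x (b i) - x (a i)|
        = ∑ j ∈ (Finset.range k).image (fun i => 2 * i),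
            ENNReal.ofReal |x (t (j + 1)) - x (t j)| := by
      rw [Finset.sum_image (by intro i _ j _ h; simp only at h; omega)]
      apply Finset.sum_congr rfl
      intro i hi
      rw [Finset.mem_range] at hi
      rw [hta i hi, htb i hi]
    rw [heq]
    apply Finset.sum_le_sum_of_subset
    intro j hj
    simp only [Finset.mem_image, Finset.mem_range] at hj ⊢
    obtain ⟨i, hi, rfl⟩ := hj
    omega
  refine hsum.trans ?_
  rw [jordanVar]
  exact le_iSup_of_le (2 * k) (le_iSup_of_le t (le_iSup_of_le ⟨hmono, fun i => hmem i⟩ le_rfl))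

/-- General version: finite sum over a nonoverlapping family is bounded by Jordan variation. -/
lemma finsum_le_jordanVar (x : ℝ → ℝ) (a b : ℕ → ℝ)
    (hbound : ∀ n, 0 ≤ a n ∧ a n ≤ b n ∧ b n ≤ 1)
    (hdisj : Pairwise fun n m => Disjoint (Set.Ioo (a n) (b n)) (Set.Ioo (a m) (b m)))
    (s : Finset ℕ) :
    ∑ n ∈ s, ENNReal.ofReal |x (b n) - x (a n)| ≤ jordanVar x := by
  classical
  set s' : Finset ℕ := s.filter (fun n => a n < b n) with hs'
  have hsplit : ∑ n ∈ s, ENNReal.ofReal |x (b n) - x (a n)|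
      = ∑ n ∈ s', ENNReal.ofReal |x (b n) - x (a n)| := by
    rw [hs']
    rw [← Finset.sum_filter_add_sum_filter_not s (fun n => a n < b n)]
    have hz : ∑ n ∈ s.filter (fun n => ¬ a n < b n),
        ENNReal.ofReal |x (b n) - x (a n)| = 0 := by
      apply Finset.sum_eq_zero
      intro n hn
      rw [Finset.mem_filter] at hn
      have hab : a n = b n := le_antisymm (hbound n).2.1 (not_lt.1 hn.2)
      simp [hab]
    rw [hz, add_zero]
  rw [hsplit]
  -- a is injective on s'
  have hinj : Set.InjOn a ↑s' := by
    intro n hn m hm hnm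
    by_contra hne
    have hn' : a n < b n := (Finset.mem_filter.1 hn).2
    have hm' : a m < b m := (Finset.mem_filter.1 hm).2
    have hd : Disjoint (Set.Ioo (a n) (b n)) (Set.Ioo (a m) (b m)) := hdisj hne
    rw [Set.disjoint_left] at hd
    set p : ℝ := (a n + min (b n) (b m)) / 2 with hp
    have h1 : a n < min (b n) (b m) := lt_min hn' (hnm ▸ hm')
    have hp1 : a n < p := by rw [hp]; linarith
    have hp2 : p < b n := by
      have := min_le_left (b n) (b m); rw [hp]; linarith
    have hp3 : p < b m := by
      have := min_le_right (b n) (b m); rw [hp]; linarith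
    exact hd ⟨hp1, hp2⟩ ⟨hnm ▸ hp1, hp3⟩
  set k := s'.card with hk
  set T : Finset ℝ := s'.image a with hT
  have hTcard : T.card = k := by rw [hT, hk, Finset.card_image_of_injOn hinj]
  set e := T.orderEmbOfFin hTcard with he
  set σ : ℕ → ℕ := fun i =>
    if h : i < k then Function.invFunOn a ↑s' (e ⟨i, h⟩) else 0 with hσ
  have hσmem : ∀ i (h : i < k), σ i ∈ s' ∧ a (σ i) = e ⟨i, h⟩ := by
    intro i h
    have hmem : (e ⟨i, h⟩ : ℝ) ∈ a '' ↑s' := by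
      have hmemT : (e ⟨i, h⟩ : ℝ) ∈ T := Finset.orderEmbOfFin_mem T hTcard ⟨i, h⟩
      rw [hT] at hmemT
      rw [← Finset.coe_image]
      exact_mod_cast hmemT
    constructor
    · simp only [hσ, dif_pos h]
      exact Function.invFunOn_mem hmem
    · simp only [hσ, dif_pos h]
      exact Function.invFunOn_eq (by rwa [Set.mem_image] at hmem)
  have haσ : ∀ i j (hi : i < k) (hj : j < k), i < j → a (σ i) < a (σ j) := by
    intro i j hi hj hij
    rw [(hσmem i hi).2, (hσmem j hj).2]
    exact (T.orderEmbOfFin hTcard).strictMono (by exact hij)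
  -- sum over s' equals sum over range k via σ
  have hsum : ∑ n ∈ s', ENNReal.ofReal |x (b n) - x (a n)|
      = ∑ i ∈ Finset.range k, ENNReal.ofReal |x (b (σ i)) - x (a (σ i))| := by
    symm
    apply Finset.sum_bij (fun i (hi : i ∈ Finset.range k) => σ i)
    · intro i hi
      exact (hσmem i (Finset.mem_range.1 hi)).1
    · intro i hi j hj hij
      rw [Finset.mem_range] at hi hj
      by_contra hne
      rcases lt_or_gt_of_ne hne with h | h
      · have := haσ i j hi hj h; rw [hij] at this; exact lt_irrefl _ this
      · have := haσ j i hj hi h; rw [hij] at this; exact lt_irrefl _ this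
    · intro n hn
      have haT : a n ∈ T := by
        rw [hT]; exact Finset.mem_image_of_mem a hn
      have : a n ∈ Set.range e := by
        rw [he, Finset.range_orderEmbOfFin]
        exact_mod_cast haT
      obtain ⟨i, hie⟩ := this
      refine ⟨i.1, Finset.mem_range.2 i.2, ?_⟩
      have h1 := (hσmem i.1 i.2).2
      have h2 : a (σ i.1) = a n := by
        rw [h1, ← hie]
      exact hinj (Finset.mem_coe.2 (hσmem i.1 i.2).1) (Finset.mem_coe.2 hn) h2
    · intros; rfl
  rw [hsum]
  apply sorted_sum_le_jordanVar x k (fun i => a (σ i)) (fun i => b (σ i))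
  · intro i _
    exact hbound (σ i)
  · intro i hik
    by_contra hlt
    push_neg at hlt
    have hi : i < k := by omega
    have hii : i + 1 < k := hik
    have hne : σ i ≠ σ (i + 1) := by
      intro hc
      have := haσ i (i + 1) hi hii (by omega)
      rw [hc] at this
      exact lt_irrefl _ this
    have hσi : a (σ i) < b (σ i) :=
      (Finset.mem_filter.1 (hσmem i hi).1).2
    have hσi1 : a (σ (i+1)) < b (σ (i+1)) :=
      (Finset.mem_filter.1 (hσmem (i+1) hii).1).2
    have hlt2 : a (σ i) < a (σ (i + 1)) := haσ i (i+1) hi hii (by omega)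
    have hd : Disjoint (Set.Ioo (a (σ i)) (b (σ i))) (Set.Ioo (a (σ (i+1)))  (b (σ (i+1)))) := hdisj hne
    rw [Set.disjoint_left] at hd
    set p : ℝ := (a (σ (i+1)) + min (b (σ i)) (b (σ (i+1)))) / 2 with hp
    have h1 : a (σ (i+1)) < min (b (σ i)) (b (σ (i+1))) := lt_min hlt hσi1
    have hp1 : a (σ (i+1)) < p := by rw [hp]; linarith
    have hp2 : p < b (σ i) := by
      have := min_le_left (b (σ i)) (b (σ (i+1))); rw [hp]; linarith
    have hp3 : p < b (σ (i+1)) := by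
      have := min_le_right (b (σ i)) (b (σ (i+1))); rw [hp]; linarith
    exact hd ⟨hlt2.trans hp1, hp2⟩ ⟨hp1, hp3⟩

/-- If `sup_k φ({k}) = M < ∞`, then every function of bounded Jordan variation belongs to
`BV(φ)`, and `sup_J φ̂(x(J)) ≤ M·var(x)`. -/
theorem jordanBV_subset_BV (φ : Set ℕ → ℝ≥0∞)
    (hφ : IsSubmeasure φ) (hlsc : IsLSC φ) (hnp : NonPathological φ)
    (M : ℝ≥0∞) (hM : (⨆ k : ℕ, φ {k}) = M) (hMtop : M ≠ ⊤) :
    ∀ x : ℝ → ℝ, varPhi φ x ≤ M * jordanVar x ∧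
      (jordanVar x < ⊤ → varPhi φ x < ⊤) := by
  intro x
  have key : varPhi φ x ≤ M * jordanVar x := by
    rw [varPhi]
    apply iSup₂_le
    intro J hJ
    rw [hatPhi]
    apply iSup₂_le
    intro m hm
    have hmM : ∀ n, m n ≤ M := by
      intro n
      have h1 := hm {n}
      have h2 : ∑' j : ({n} : Set ℕ), m j = m n := tsum_singleton n m
      rw [h2] at h1
      exact h1.trans (hM ▸ le_iSup (fun j => φ {j}) n)
    calc ∑' n, m n * ENNReal.ofReal |(fun j => |x (J j).2 - x (J j).1|) n|
        ≤ ∑' n, M * ENNReal.ofReal |(fun j => |x (J j).2 - x (J j).1|) n| :=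
          ENNReal.tsum_le_tsum fun n => mul_le_mul_left (hmM n) _
      _ = M * ∑' n, ENNReal.ofReal |(fun j => |x (J j).2 - x (J j).1|) n| :=
          ENNReal.tsum_mul_left
      _ ≤ M * jordanVar x := by
          apply mul_le_mul_right
          rw [ENNReal.tsum_eq_iSup_sum]
          apply iSup_le
          intro s
          have h := finsum_le_jordanVar x (fun n => (J n).1) (fun n => (J n).2)
            hJ.1 hJ.2 s
          refine le_trans (le_of_eq ?_) h
          apply Finset.sum_congr rfl
          intro n _
          simp [abs_abs]
  exact ⟨key, fun h => lt_of_le_of_lt key (ENNReal.mul_lt_top hMtop.lt_top h)⟩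
end

section
/- Let φ be a non-pathological lsc submeasure with φ(ℕ) = ∞. Then every x ∈ BV(φ) is a regulated function: at every point of [0,1] it has a finite left limit and a finite right limit (where defined). -/
open Filter Topology ENNReal

lemma hatPhi_eq_top (φ : Set ℕ → ℝ≥0∞) (hnp : NonPathological φ) (hinf : φ Set.univ = ⊤)
    (y : ℕ → ℝ) (ε : ℝ) (hε : 0 < ε) (h : ∀ n, ε ≤ |y n|) : hatPhi φ y = ⊤ := by
  have h1 : (⊤ : ℝ≥0∞) = ⨆ m ∈ Meas φ, ∑' n, m n := by
    conv_lhs => rw [← hinf]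
    rw [hnp Set.univ]
    exact iSup_congr fun m => iSup_congr fun _ => tsum_univ m
  rw [eq_top_iff]
  have h2 : (⊤ : ℝ≥0∞) = (⨆ m ∈ Meas φ, ∑' n, m n) * ENNReal.ofReal ε := by
    rw [← h1, ENNReal.top_mul (ENNReal.ofReal_pos.mpr hε).ne']
  rw [h2]
  simp_rw [ENNReal.iSup_mul]
  unfold hatPhi
  refine iSup_mono fun m => iSup_mono fun _ => ?_
  rw [← ENNReal.tsum_mul_right]
  refine ENNReal.tsum_le_tsum fun n => ?_
  exact mul_le_mul_right (ENNReal.ofReal_le_ofReal (h n)) _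

lemma exists_left_limit (φ : Set ℕ → ℝ≥0∞) (hnp : NonPathological φ)
    (hinf : φ Set.univ = ⊤) (x : ℝ → ℝ) (hBV : varPhi φ x < ⊤) (t : ℝ)
    (ht0 : 0 < t) (ht1 : t ≤ 1) : ∃ L, Tendsto x (𝓝[Set.Ico (0:ℝ) t] t) (𝓝 L) := by
  haveI hnb : (𝓝[Set.Ico (0:ℝ) t] t).NeBot := by
    refine mem_closure_iff_nhdsWithin_neBot.mp ?_
    rw [closure_Ico ht0.ne]
    exact Set.right_mem_Icc.mpr ht0.le
  by_contra hL
  push_neg at hL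
  have hnc : ¬ Cauchy (map x (𝓝[Set.Ico (0:ℝ) t] t)) := fun hc => by
    obtain ⟨L, hL'⟩ := cauchy_map_iff_exists_tendsto.mp hc
    exact hL L hL'
  rw [Metric.cauchy_iff] at hnc
  push_neg at hnc
  obtain ⟨ε, hε, hcf⟩ := hnc (map_neBot)
  -- step lemma
  have step : ∀ c : ℝ, c < t → ∃ p : ℝ × ℝ,
      c < p.1 ∧ 0 ≤ p.1 ∧ p.1 ≤ p.2 ∧ p.2 < t ∧ ε ≤ |x p.2 - x p.1| := by
    intro c hc
    have hmem : (Set.Ioi c ∩ Set.Ico 0 t) ∈ 𝓝[Set.Ico (0:ℝ) t] t :=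
      inter_mem (mem_nhdsWithin_of_mem_nhds (Ioi_mem_nhds hc)) self_mem_nhdsWithin
    obtain ⟨u', hu', v', hv', huv⟩ := hcf _ (image_mem_map hmem)
    obtain ⟨u, hu, rfl⟩ := hu'
    obtain ⟨v, hv, rfl⟩ := hv'
    rw [Real.dist_eq] at huv
    rcases le_total u v with hvu | hvu
    · exact ⟨(u, v), hu.1, hu.2.1, hvu, hv.2.2, by rwa [abs_sub_comm]⟩
    · exact ⟨(v, u), hv.1, hv.2.1, hvu, hu.2.2, huv⟩
  choose g hg using step
  let F : ℕ → {c : ℝ // c < t} := fun n =>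
    Nat.rec ⟨t - 1, by linarith⟩ (fun _ ih => ⟨(g ih.1 ih.2).2, (hg ih.1 ih.2).2.2.2.1⟩) n
  set J : ℕ → ℝ × ℝ := fun n => g (F n).1 (F n).2 with hJdef
  have hJ : ∀ n, (F n).1 < (J n).1 ∧ 0 ≤ (J n).1 ∧ (J n).1 ≤ (J n).2 ∧ (J n).2 < t ∧
      ε ≤ |x (J n).2 - x (J n).1| := fun n => hg _ _
  have hchain : ∀ n, (J n).2 = (F (n+1)).1 := fun n => rfl
  have hlt : ∀ n, (J n).2 < (J (n+1)).1 := fun n => by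
    have := (hJ (n+1)).1; rwa [← hchain n] at this
  have hmono : ∀ n m, n < m → (J n).2 ≤ (J m).1 := by
    intro n m h
    induction m with
    | zero => omega
    | succ k ih =>
      rcases Nat.lt_succ_iff_lt_or_eq.mp h with h' | h'
      · exact le_trans (ih h') (le_trans (hJ k).2.2.1 (hlt k).le)
      · subst h'; exact (hlt n).le
  have hNO : NonOverlapping J := by
    constructor
    · exact fun n => ⟨(hJ n).2.1, (hJ n).2.2.1, le_trans (hJ n).2.2.2.1.le ht1⟩
    · intro n m hnm
      rcases hnm.lt_or_gt with h | h
      · rw [Set.disjoint_left]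
        intro z hz1 hz2
        have := hmono n m h
        exact absurd (lt_of_le_of_lt (le_trans hz1.2.le this) hz2.1) (lt_irrefl z)
      · rw [Set.disjoint_left]
        intro z hz1 hz2
        have := hmono m n h
        exact absurd (lt_of_le_of_lt (le_trans hz2.2.le this) hz1.1) (lt_irrefl z)
  have hvar : hatPhi φ (fun n => |x (J n).2 - x (J n).1|) ≤ varPhi φ x :=
    le_iSup₂ (f := fun (J : ℕ → ℝ × ℝ) (_ : NonOverlapping J) =>
      hatPhi φ (fun n => |x (J n).2 - x (J n).1|)) J hNO
  have htop : hatPhi φ (fun n => |x (J n).2 - x (J n).1|) = ⊤ :=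
    hatPhi_eq_top φ hnp hinf _ ε hε fun n => by
      rw [abs_abs]; exact (hJ n).2.2.2.2
  rw [htop] at hvar
  exact absurd (top_le_iff.mp hvar) hBV.ne

lemma exists_right_limit (φ : Set ℕ → ℝ≥0∞) (hnp : NonPathological φ)
    (hinf : φ Set.univ = ⊤) (x : ℝ → ℝ) (hBV : varPhi φ x < ⊤) (t : ℝ)
    (ht0 : 0 ≤ t) (ht1 : t < 1) : ∃ L, Tendsto x (𝓝[Set.Ioc t (1:ℝ)] t) (𝓝 L) := by
  haveI hnb : (𝓝[Set.Ioc t (1:ℝ)] t).NeBot := by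
    refine mem_closure_iff_nhdsWithin_neBot.mp ?_
    rw [closure_Ioc ht1.ne]
    exact Set.left_mem_Icc.mpr ht1.le
  by_contra hL
  push_neg at hL
  have hnc : ¬ Cauchy (map x (𝓝[Set.Ioc t (1:ℝ)] t)) := fun hc => by
    obtain ⟨L, hL'⟩ := cauchy_map_iff_exists_tendsto.mp hc
    exact hL L hL'
  rw [Metric.cauchy_iff] at hnc
  push_neg at hnc
  obtain ⟨ε, hε, hcf⟩ := hnc (map_neBot)
  have step : ∀ c : ℝ, t < c → ∃ p : ℝ × ℝ,
      p.2 < c ∧ t < p.1 ∧ p.1 ≤ p.2 ∧ p.2 ≤ 1 ∧ ε ≤ |x p.2 - x p.1| := by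
    intro c hc
    have hmem : (Set.Iio c ∩ Set.Ioc t 1) ∈ 𝓝[Set.Ioc t (1:ℝ)] t :=
      inter_mem (mem_nhdsWithin_of_mem_nhds (Iio_mem_nhds hc)) self_mem_nhdsWithin
    obtain ⟨u', hu', v', hv', huv⟩ := hcf _ (image_mem_map hmem)
    obtain ⟨u, hu, rfl⟩ := hu'
    obtain ⟨v, hv, rfl⟩ := hv'
    rw [Real.dist_eq] at huv
    rcases le_total u v with hvu | hvu
    · exact ⟨(u, v), hv.1, hu.2.1, hvu, hv.2.2, by rwa [abs_sub_comm]⟩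
    · exact ⟨(v, u), hu.1, hv.2.1, hvu, hu.2.2, huv⟩
  choose g hg using step
  let F : ℕ → {c : ℝ // t < c} := fun n =>
    Nat.rec ⟨t + 1, by linarith⟩ (fun _ ih => ⟨(g ih.1 ih.2).1, (hg ih.1 ih.2).2.1⟩) n
  set J : ℕ → ℝ × ℝ := fun n => g (F n).1 (F n).2 with hJdef
  have hJ : ∀ n, (J n).2 < (F n).1 ∧ t < (J n).1 ∧ (J n).1 ≤ (J n).2 ∧ (J n).2 ≤ 1 ∧
      ε ≤ |x (J n).2 - x (J n).1| := fun n => hg _ _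
  have hchain : ∀ n, (J n).1 = (F (n+1)).1 := fun n => rfl
  have hlt : ∀ n, (J (n+1)).2 < (J n).1 := fun n => by
    have := (hJ (n+1)).1; rwa [← hchain n] at this
  have hmono : ∀ n m, n < m → (J m).2 ≤ (J n).1 := by
    intro n m h
    induction m with
    | zero => omega
    | succ k ih =>
      rcases Nat.lt_succ_iff_lt_or_eq.mp h with h' | h'
      · exact le_trans (le_trans (hlt k).le (hJ k).2.2.1) (ih h')
      · subst h'; exact (hlt n).le
  have hNO : NonOverlapping J := by
    constructor
    · exact fun n => ⟨le_trans ht0 (hJ n).2.1.le, (hJ n).2.2.1, (hJ n).2.2.2.1⟩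
    · intro n m hnm
      rcases hnm.lt_or_gt with h | h
      · rw [Set.disjoint_left]
        intro z hz1 hz2
        have := hmono n m h
        exact absurd (lt_of_le_of_lt (le_trans hz2.2.le this) hz1.1) (lt_irrefl z)
      · rw [Set.disjoint_left]
        intro z hz1 hz2
        have := hmono m n h
        exact absurd (lt_of_le_of_lt (le_trans hz1.2.le this) hz2.1) (lt_irrefl z)
  have hvar : hatPhi φ (fun n => |x (J n).2 - x (J n).1|) ≤ varPhi φ x :=
    le_iSup₂ (f := fun (J : ℕ → ℝ × ℝ) (_ : NonOverlapping J) =>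
      hatPhi φ (fun n => |x (J n).2 - x (J n).1|)) J hNO
  have htop : hatPhi φ (fun n => |x (J n).2 - x (J n).1|) = ⊤ :=
    hatPhi_eq_top φ hnp hinf _ ε hε fun n => by
      rw [abs_abs]; exact (hJ n).2.2.2.2
  rw [htop] at hvar
  exact absurd (top_le_iff.mp hvar) hBV.ne

/-- If `φ(ℕ) = ∞`, then every member of `BV(φ)` is regulated: it has finite one-sided
limits at every point of `[0,1]` (where defined). -/
theorem BV_regulated (φ : Set ℕ → ℝ≥0∞)
    (hφ : IsSubmeasure φ) (hlsc : IsLSC φ) (hnp : NonPathological φ)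
    (hinf : φ Set.univ = ⊤) :
    ∀ x : ℝ → ℝ, (∃ N : ℝ, ∀ t ∈ Set.Icc (0:ℝ) 1, |x t| ≤ N) → varPhi φ x < ⊤ →
      ∀ t ∈ Set.Icc (0:ℝ) 1,
        (0 < t → ∃ L : ℝ, Filter.Tendsto x (𝓝[Set.Icc (0:ℝ) 1 ∩ Set.Iio t] t) (𝓝 L)) ∧
        (t < 1 → ∃ L : ℝ, Filter.Tendsto x (𝓝[Set.Icc (0:ℝ) 1 ∩ Set.Ioi t] t) (𝓝 L)) := by
  intro x _ hBV t ht
  constructor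
  · intro ht0
    have hset : Set.Icc (0:ℝ) 1 ∩ Set.Iio t = Set.Ico 0 t := by
      ext s
      simp only [Set.mem_inter_iff, Set.mem_Icc, Set.mem_Iio, Set.mem_Ico]
      constructor
      · rintro ⟨⟨h1, _⟩, h3⟩; exact ⟨h1, h3⟩
      · rintro ⟨h1, h2⟩; exact ⟨⟨h1, le_trans h2.le ht.2⟩, h2⟩
    rw [hset]
    exact exists_left_limit φ hnp hinf x hBV t ht0 ht.2
  · intro ht1
    have hset : Set.Icc (0:ℝ) 1 ∩ Set.Ioi t = Set.Ioc t 1 := by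
      ext s
      simp only [Set.mem_inter_iff, Set.mem_Icc, Set.mem_Ioi, Set.mem_Ioc]
      constructor
      · rintro ⟨⟨_, h2⟩, h3⟩; exact ⟨h3, h2⟩
      · rintro ⟨h1, h2⟩; exact ⟨⟨le_trans ht.1 h1.le, h2⟩, h1⟩
    rw [hset]
    exact exists_right_limit φ hnp hinf x hBV t ht.1 ht1
end

section
/- For a non-pathological lsc submeasure φ, the following are equivalent: (i) φ(ℕ) < ∞; (ii) Fin(φ) = P(ℕ); (iii) ℓ_∞ ⊆ FIN(φ); (iv) every nonincreasing (in absolute value) sequence belongs to FIN(φ). -/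
open Filter Topology ENNReal

/-- TFAE: (i) `φ(ℕ) < ∞`; (ii) `Fin(φ) = P(ℕ)`; (iii) `ℓ_∞ ⊆ FIN(φ)`;
(iv) every sequence nonincreasing in absolute value belongs to `FIN(φ)`. -/
theorem finite_submeasure_tfae (φ : Set ℕ → ℝ≥0∞)
    (hφ : IsSubmeasure φ) (hlsc : IsLSC φ) (hnp : NonPathological φ) :
    List.TFAE
      [φ Set.univ < ⊤,
       ∀ C : Set ℕ, C ∈ FinIdeal φ,
       ∀ x : ℕ → ℝ, (∃ M : ℝ, ∀ n, |x n| ≤ M) → x ∈ FINspace φ,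
       ∀ x ∈ Mon, x ∈ FINspace φ] := by
  tfae_have 1 → 3 := by
    intro h1 x ⟨M, hM⟩
    have : hatPhi φ x ≤ φ Set.univ * ENNReal.ofReal M := by
      refine iSup₂_le fun m hm => ?_
      calc ∑' n, m n * ENNReal.ofReal |x n|
          ≤ ∑' n, m n * ENNReal.ofReal M := by
            refine ENNReal.tsum_le_tsum fun n => ?_
            exact mul_le_mul_right (ENNReal.ofReal_le_ofReal (hM n)) _
        _ = (∑' n, m n) * ENNReal.ofReal M := ENNReal.tsum_mul_right
        _ ≤ φ Set.univ * ENNReal.ofReal M := by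
            refine mul_le_mul_left ?_ _
            have := hm Set.univ
            rwa [tsum_univ] at this
    exact lt_of_le_of_lt this (ENNReal.mul_lt_top h1 ENNReal.ofReal_lt_top)
  tfae_have 3 → 4 := by
    intro h3 x hx
    refine h3 x ⟨|x 0|, fun n => ?_⟩
    induction n with
    | zero => exact le_refl _
    | succ n ih => exact le_trans (hx n) ih
  tfae_have 4 → 2 := by
    intro h4 C
    have hone : (fun _ : ℕ => (1 : ℝ)) ∈ Mon := fun n => le_refl _
    have h1 : hatPhi φ (fun _ => 1) < ⊤ := h4 _ hone
    have : φ C ≤ hatPhi φ (fun _ => 1) := by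
      rw [hnp C]
      unfold hatPhi
      refine iSup₂_le fun m hm => ?_
      refine le_trans ?_ (le_iSup₂ (f := fun m (_ : m ∈ Meas φ) => ∑' n, m n * ENNReal.ofReal |(fun _ : ℕ => (1:ℝ)) n|) m hm)
      have : ∀ n, m n * ENNReal.ofReal |(1:ℝ)| = m n := by
        intro n; simp
      simp only [this]
      rw [tsum_subtype]
      exact ENNReal.tsum_le_tsum fun n => Set.indicator_le_self _ _ _
    exact lt_of_le_of_lt this h1
  tfae_have 2 → 1 := fun h2 => h2 Set.univ
  tfae_finish
end

section
/- For a non-pathological lsc submeasure φ, the following are equivalent: (i) lim_n φ({n, n+1, ...}) = 0; (ii) Exh(φ) = P(ℕ); (iii) ℓ_∞ ⊆ EXH(φ); (iv) mEXH(φ) ⊄ c_0. -/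
open Filter Topology ENNReal

/-- TFAE: (i) `lim_n φ({n,n+1,…}) = 0`; (ii) `Exh(φ) = P(ℕ)`; (iii) `ℓ_∞ ⊆ EXH(φ)`;
(iv) `mEXH(φ) ⊄ c₀`. -/
theorem exhaustive_submeasure_tfae (φ : Set ℕ → ℝ≥0∞)
    (hφ : IsSubmeasure φ) (hlsc : IsLSC φ) (hnp : NonPathological φ) :
    List.TFAE
      [Tendsto (fun n : ℕ => φ (Set.Ici n)) atTop (𝓝 0),
       ∀ C : Set ℕ, C ∈ ExhIdeal φ,
       ∀ x : ℕ → ℝ, (∃ M : ℝ, ∀ n, |x n| ≤ M) → x ∈ EXHspace φ,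
       ∃ x : ℕ → ℝ, x ∈ Mon ∧ x ∈ EXHspace φ ∧ ¬ Tendsto x atTop (𝓝 0)] := by
  tfae_have 1 → 3
  · intro h1 x hx
    obtain ⟨M, hM⟩ := hx
    have key : ∀ n, hatPhi φ (Set.indicator (Set.Ici n) x) ≤ ENNReal.ofReal M * φ (Set.Ici n) := by
      intro n
      refine iSup₂_le fun m hm => ?_
      calc ∑' k, m k * ENNReal.ofReal |Set.indicator (Set.Ici n) x k|
          ≤ ∑' k, (Set.Ici n).indicator (fun k => ENNReal.ofReal M * m k) k := by
            refine ENNReal.tsum_le_tsum fun k => ?_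
            by_cases hk : k ∈ Set.Ici n
            · simp only [Set.indicator_of_mem hk, mul_comm (ENNReal.ofReal M)]
              exact mul_le_mul_right (ENNReal.ofReal_le_ofReal (hM k)) _
            · simp [Set.indicator_of_notMem hk]
        _ = ENNReal.ofReal M * ∑' (k : Set.Ici n), m k := by
            rw [← tsum_subtype, ENNReal.tsum_mul_left]
        _ ≤ ENNReal.ofReal M * φ (Set.Ici n) := mul_le_mul_right (hm (Set.Ici n)) _
    have hlim : Tendsto (fun n => ENNReal.ofReal M * φ (Set.Ici n)) atTop (𝓝 0) := by
      have := ENNReal.Tendsto.const_mul h1 (a := ENNReal.ofReal M)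
        (Or.inr ENNReal.ofReal_ne_top)
      simpa using this
    exact tendsto_of_tendsto_of_tendsto_of_le_of_le tendsto_const_nhds hlim
      (fun n => zero_le) key
  tfae_have 3 → 2
  · intro h3 C
    have hx := h3 (Set.indicator C fun _ => (1 : ℝ))
      ⟨1, fun n => by by_cases h : n ∈ C <;> simp [Set.indicator_of_mem, Set.indicator_of_notMem, h]⟩
    have key : ∀ n, φ (C \ Set.Iio n)
        = hatPhi φ (Set.indicator (Set.Ici n) (Set.indicator C fun _ => (1 : ℝ))) := by
      intro n
      have hset : C \ Set.Iio n = Set.Ici n ∩ C := by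
        ext k; simp [Set.mem_diff, Nat.not_lt, and_comm]
      rw [hnp (C \ Set.Iio n), hset]
      unfold hatPhi
      refine iSup_congr fun m => iSup_congr fun hm => ?_
      rw [Set.indicator_indicator, tsum_subtype]
      refine tsum_congr fun k => ?_
      by_cases hk : k ∈ Set.Ici n ∩ C
      · simp [Set.indicator_of_mem hk]
      · simp [Set.indicator_of_notMem hk]
    simp only [ExhIdeal, Set.mem_setOf_eq, key]
    exact hx
  tfae_have 2 → 1
  · intro h2
    have h := h2 Set.univ
    have hset : ∀ n : ℕ, Set.univ \ Set.Iio n = Set.Ici n := by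
      intro n; ext k; simp [Nat.not_lt]
    simpa only [ExhIdeal, Set.mem_setOf_eq, hset] using h
  tfae_have 3 → 4
  · intro h3
    refine ⟨fun _ => 1, fun n => le_refl _, h3 _ ⟨1, fun n => by norm_num⟩, fun h => ?_⟩
    have := tendsto_nhds_unique h tendsto_const_nhds
    norm_num at this
  tfae_have 4 → 1
  · rintro ⟨x, hmon, hexh, hnot⟩
    have hanti : Antitone fun n => |x n| := antitone_nat_of_succ_le hmon
    obtain ⟨ε, hε, hlb⟩ : ∃ ε > 0, ∀ n, ε ≤ |x n| := by
      by_contra hc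
      push_neg at hc
      apply hnot
      rw [tendsto_zero_iff_abs_tendsto_zero]
      rw [Metric.tendsto_atTop]
      intro ε hε
      obtain ⟨N, hN⟩ := hc ε hε
      refine ⟨N, fun n hn => ?_⟩
      rw [Real.dist_eq, sub_zero]
      simp only [Function.comp_apply, abs_abs]
      exact lt_of_le_of_lt (hanti hn) hN
    have key : ∀ n, ENNReal.ofReal ε * φ (Set.Ici n)
        ≤ hatPhi φ (Set.indicator (Set.Ici n) x) := by
      intro n
      calc ENNReal.ofReal ε * φ (Set.Ici n)
          = ⨆ m ∈ Meas φ, ENNReal.ofReal ε * ∑' (k : Set.Ici n), m k := by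
            rw [hnp (Set.Ici n)]; simp_rw [ENNReal.mul_iSup]
        _ ≤ hatPhi φ (Set.indicator (Set.Ici n) x) := by
            refine iSup₂_le fun m hm => le_iSup₂_of_le m hm ?_
            rw [tsum_subtype, ← ENNReal.tsum_mul_left]
            refine ENNReal.tsum_le_tsum fun k => ?_
            by_cases hk : k ∈ Set.Ici n
            · simp only [Set.indicator_of_mem hk, mul_comm (ENNReal.ofReal ε)]
              exact mul_le_mul_right (ENNReal.ofReal_le_ofReal (hlb k)) _
            · simp [Set.indicator_of_notMem hk]
    have hsq : Tendsto (fun n => ENNReal.ofReal ε * φ (Set.Ici n)) atTop (𝓝 0) :=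
      tendsto_of_tendsto_of_tendsto_of_le_of_le tendsto_const_nhds hexh
        (fun n => zero_le) key
    have hne : ENNReal.ofReal ε ≠ 0 := (ENNReal.ofReal_pos.2 hε).ne'
    have := ENNReal.Tendsto.const_mul hsq (a := (ENNReal.ofReal ε)⁻¹)
      (Or.inr (ENNReal.inv_ne_top.2 hne))
    simp only [← mul_assoc, ENNReal.inv_mul_cancel hne ENNReal.ofReal_ne_top,
      one_mul, mul_zero] at this
    exact this
  tfae_finish
end

section
/- Let φ_1, φ_2 be non-pathological lsc submeasures with all singletons of positive submeasure. If for every n there exists a finitely supported sequence z with φ̂_2(z) > 2^{2n+1} φ̂_1(z), then there exists x ∈ ℝ^ℕ with x ∈ EXH(φ_1) but φ̂_2(x) = ∞; in particular EXH(φ_1) ⊄ FIN(φ_2). -/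
open Filter Topology ENNReal

noncomputable def hat' (φ : Set ℕ → ℝ≥0∞) (u : ℕ → ℝ≥0∞) : ℝ≥0∞ :=
  ⨆ m ∈ Meas φ, ∑' n, m n * u n

lemma hatPhi_eq_hat' (φ : Set ℕ → ℝ≥0∞) (x : ℕ → ℝ) :
    hatPhi φ x = hat' φ (fun n => ENNReal.ofReal |x n|) := rfl

lemma hat'_mono (φ : Set ℕ → ℝ≥0∞) {u v : ℕ → ℝ≥0∞} (h : ∀ n, u n ≤ v n) :
    hat' φ u ≤ hat' φ v :=
  iSup₂_mono fun m _ => ENNReal.tsum_le_tsum fun n => mul_le_mul_right (h n) _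

lemma hat'_zero (φ : Set ℕ → ℝ≥0∞) : hat' φ (fun _ => 0) = 0 :=
  le_antisymm (iSup₂_le fun _ _ => by simp) (zero_le)

lemma le_hat' (φ : Set ℕ → ℝ≥0∞) {m : ℕ → ℝ≥0∞} (hm : m ∈ Meas φ) (u : ℕ → ℝ≥0∞) :
    ∑' n, m n * u n ≤ hat' φ u :=
  le_iSup₂ (f := fun m (_ : m ∈ Meas φ) => ∑' n, m n * u n) m hm

lemma hat'_le_tsum (φ : Set ℕ → ℝ≥0∞) (u : ℕ → ℕ → ℝ≥0∞) :
    hat' φ (fun n => ∑' k, u k n) ≤ ∑' k, hat' φ (u k) := by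
  refine iSup₂_le fun m hm => ?_
  calc ∑' n, m n * ∑' k, u k n = ∑' n, ∑' k, m n * u k n := by
        simp [ENNReal.tsum_mul_left]
    _ = ∑' k, ∑' n, m n * u k n := ENNReal.tsum_comm
    _ ≤ ∑' k, hat' φ (u k) := ENNReal.tsum_le_tsum fun k => le_hat' φ hm (u k)

lemma hat'_smul (φ : Set ℕ → ℝ≥0∞) (c : ℝ≥0∞) (u : ℕ → ℝ≥0∞) :
    hat' φ (fun n => c * u n) = c * hat' φ u := by
  simp only [hat', ENNReal.mul_iSup]
  refine iSup_congr fun m => iSup_congr fun hm => ?_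
  rw [← ENNReal.tsum_mul_left]
  exact tsum_congr fun n => mul_left_comm _ _ _

lemma meas_single_le {φ : Set ℕ → ℝ≥0∞} {m : ℕ → ℝ≥0∞} (hm : m ∈ Meas φ) (i : ℕ) :
    m i ≤ φ {i} := by
  have := hm {i}
  rwa [tsum_singleton] at this

lemma exists_meas_pos {φ : Set ℕ → ℝ≥0∞} (hnp : NonPathological φ) {i : ℕ}
    (hpos : 0 < φ {i}) : ∃ m ∈ Meas φ, 0 < m i := by
  rw [hnp {i}] at hpos
  simp only [tsum_singleton] at hpos
  obtain ⟨m, hm⟩ := lt_iSup_iff.mp hpos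
  obtain ⟨hm', h'⟩ := lt_iSup_iff.mp hm
  exact ⟨m, hm', h'⟩

lemma hatPhi_lt_top_of_finsupp {φ : Set ℕ → ℝ≥0∞} (hfin : ∀ i, φ {i} < ⊤)
    {z : ℕ → ℝ} {M : ℕ} (hz : ∀ i, M ≤ i → z i = 0) : hatPhi φ z < ⊤ := by
  have hle : hatPhi φ z ≤ ∑ i ∈ Finset.range M, φ {i} * ENNReal.ofReal |z i| := by
    refine iSup₂_le fun m hm => ?_
    rw [tsum_eq_sum (s := Finset.range M) (fun i hi => by
      rw [hz i (le_of_not_gt fun hl => hi (Finset.mem_range.mpr hl))]; simp)]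
    exact Finset.sum_le_sum fun i _ => mul_le_mul_left (meas_single_le hm i) _
  exact lt_of_le_of_lt hle
    (ENNReal.sum_lt_top.mpr fun i _ => ENNReal.mul_lt_top (hfin i) ENNReal.ofReal_lt_top)

/-- If `φ₂ ⋠ φ₁` (witnessed by finitely supported sequences `z` with
`φ̂₂(z) > 2^{2n+1} φ̂₁(z)`), then there is `x ∈ EXH(φ₁)` with `φ̂₂(x) = ∞`; in particular
`EXH(φ₁) ⊄ FIN(φ₂)`. -/
theorem EXH_not_subset_FIN (φ₁ φ₂ : Set ℕ → ℝ≥0∞)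
    (hφ₁ : IsSubmeasure φ₁) (hlsc₁ : IsLSC φ₁) (hnp₁ : NonPathological φ₁)
    (hφ₂ : IsSubmeasure φ₂) (hlsc₂ : IsLSC φ₂) (hnp₂ : NonPathological φ₂)
    (hpos₁ : ∀ i : ℕ, 0 < φ₁ {i}) (hpos₂ : ∀ i : ℕ, 0 < φ₂ {i})
    (h : ∀ n : ℕ, ∃ z : ℕ → ℝ, (∃ m : ℕ, ∀ i, m ≤ i → z i = 0) ∧
      (2 : ℝ≥0∞) ^ (2 * n + 1) * hatPhi φ₁ z < hatPhi φ₂ z) :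
    ∃ x : ℕ → ℝ, x ∈ EXHspace φ₁ ∧ hatPhi φ₂ x = ⊤ := by
  classical
  -- measures with positive atoms
  choose μ hμmem hμpos using fun i => exists_meas_pos hnp₁ (hpos₁ i)
  have hμtop : ∀ i, μ i i ≠ ⊤ :=
    fun i => (lt_of_le_of_lt (meas_single_le (hμmem i) i) (hφ₁.2.1 i)).ne
  -- witnesses
  choose z hzsupp hzbig using h
  choose M hM using hzsupp
  set A : ℕ → ℝ≥0∞ := fun k => hatPhi φ₁ (z k) with hA
  have hAtop : ∀ k, A k ≠ ⊤ := fun k => (hatPhi_lt_top_of_finsupp hφ₁.2.1 (hM k)).ne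
  have hz0 : ∀ k, ∃ i, z k i ≠ 0 := by
    intro k
    by_contra hc
    push_neg at hc
    have h0 : hatPhi φ₂ (z k) = 0 := by
      have : (fun n => ENNReal.ofReal |z k n|) = fun _ => 0 := by
        funext n; simp [hc n]
      rw [hatPhi_eq_hat', this, hat'_zero]
    have := hzbig k
    rw [h0] at this
    exact absurd this (by simp)
  have hApos : ∀ k, 0 < A k := by
    intro k
    obtain ⟨i, hi⟩ := hz0 k
    calc 0 < μ i i * ENNReal.ofReal |z k i| :=
          ENNReal.mul_pos (hμpos i).ne' (ENNReal.ofReal_pos.mpr (abs_pos.mpr hi)).ne'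
      _ ≤ ∑' n, μ i n * ENNReal.ofReal |z k n| := ENNReal.le_tsum i
      _ ≤ A k := le_hat' φ₁ (hμmem i) _
  -- scaling constants
  set c : ℕ → ℝ := fun k => (2 : ℝ)⁻¹ ^ k / (A k).toReal with hc
  have hcpos : ∀ k, 0 < c k := fun k =>
    div_pos (pow_pos (by norm_num) k) (ENNReal.toReal_pos (hApos k).ne' (hAtop k))
  have hcoe : ∀ k, ENNReal.ofReal (c k) = 2⁻¹ ^ k / A k := by
    intro k
    rw [hc]
    rw [ENNReal.ofReal_div_of_pos (ENNReal.toReal_pos (hApos k).ne' (hAtop k)),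
      ENNReal.ofReal_pow (by norm_num), ENNReal.ofReal_inv_of_pos (by norm_num),
      ENNReal.ofReal_ofNat, ENNReal.ofReal_toReal (hAtop k)]
  -- the blocks
  set W : ℕ → ℕ → ℝ≥0∞ := fun k n => ENNReal.ofReal (c k * |z k n|) with hW
  have hWeq : ∀ k, W k = fun n => ENNReal.ofReal (c k) * ENNReal.ofReal |z k n| := by
    intro k; funext n
    rw [hW]; exact ENNReal.ofReal_mul (hcpos k).le
  have hhat1w : ∀ k, hat' φ₁ (W k) = 2⁻¹ ^ k := by
    intro k
    rw [hWeq k, hat'_smul, hcoe k, ← hatPhi_eq_hat']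
    exact ENNReal.div_mul_cancel (hApos k).ne' (hAtop k)
  have h2top : ∀ k : ℕ, ((2:ℝ≥0∞) ^ k) ≠ ⊤ := fun k => (pow_ne_top (by simp))
  have h2k : ∀ k : ℕ, (2:ℝ≥0∞)⁻¹ ^ k * 2 ^ (2*k+1) = 2 ^ (k+1) := by
    intro k
    rw [← ENNReal.inv_pow, show 2*k+1 = k + (k+1) by ring, pow_add, ← mul_assoc,
      ENNReal.inv_mul_cancel (pow_ne_zero k two_ne_zero) (h2top k), one_mul]
  have hhat2w : ∀ k, 2 ^ (k+1) ≤ hat' φ₂ (W k) := by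
    intro k
    rw [hWeq k, hat'_smul, ← hatPhi_eq_hat']
    calc (2:ℝ≥0∞) ^ (k+1) = ENNReal.ofReal (c k) * (2 ^ (2*k+1) * A k) := by
          rw [hcoe k, div_eq_mul_inv]
          rw [show 2⁻¹ ^ k * (A k)⁻¹ * (2 ^ (2*k+1) * A k)
              = (2⁻¹ ^ k * 2 ^ (2*k+1)) * ((A k)⁻¹ * A k) by ring]
          rw [ENNReal.inv_mul_cancel (hApos k).ne' (hAtop k), mul_one, h2k k]
      _ ≤ ENNReal.ofReal (c k) * hatPhi φ₂ (z k) := mul_le_mul_right (hzbig k).le _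
  -- the sequence
  set X : ℕ → ℝ≥0∞ := fun n => ∑' k, W k n with hXdef
  have hWle : ∀ k n, W k n ≤ 2⁻¹ ^ k / μ n n := by
    intro k n
    rw [ENNReal.le_div_iff_mul_le (Or.inl (hμpos n).ne') (Or.inl (hμtop n))]
    calc W k n * μ n n = μ n n * W k n := mul_comm _ _
      _ ≤ ∑' j, μ n j * W k j := ENNReal.le_tsum n
      _ ≤ hat' φ₁ (W k) := le_hat' φ₁ (hμmem n) _
      _ = 2⁻¹ ^ k := hhat1w k
  have geom_ne_top : (∑' k : ℕ, (2:ℝ≥0∞)⁻¹ ^ k) ≠ ⊤ := by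
    rw [ENNReal.tsum_geometric]
    rw [ENNReal.inv_ne_top]
    exact (tsub_pos_of_lt (ENNReal.inv_lt_one.mpr one_lt_two)).ne'
  have hXtop : ∀ n, X n ≠ ⊤ := by
    intro n
    have : X n ≤ (∑' k : ℕ, (2:ℝ≥0∞)⁻¹ ^ k) * (μ n n)⁻¹ := by
      rw [← ENNReal.tsum_mul_right]
      exact ENNReal.tsum_le_tsum fun k => (hWle k n).trans_eq (div_eq_mul_inv _ _)
    exact (lt_of_le_of_lt this (ENNReal.mul_lt_top geom_ne_top.lt_top
      (ENNReal.inv_lt_top.mpr (hμpos n)))).ne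
  refine ⟨fun n => (X n).toReal, ?_, ?_⟩
  · -- EXH
    have hofx : ∀ n, ENNReal.ofReal |(X n).toReal| = X n := fun n => by
      rw [abs_of_nonneg ENNReal.toReal_nonneg, ENNReal.ofReal_toReal (hXtop n)]
    rw [EXHspace, Set.mem_setOf_eq, ENNReal.tendsto_atTop_zero]
    intro ε hε
    -- tail of geometric series
    have htail := ENNReal.tendsto_sum_nat_add (fun k => (2:ℝ≥0∞)⁻¹ ^ k) geom_ne_top
    rw [ENNReal.tendsto_atTop_zero] at htail
    obtain ⟨K, hK⟩ := htail ε hε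
    have hKle : (∑' k : ℕ, (2:ℝ≥0∞)⁻¹ ^ (k + K)) ≤ ε := hK K le_rfl
    refine ⟨(Finset.range K).sup M, fun N hN => ?_⟩
    set u : ℕ → ℕ → ℝ≥0∞ := fun k n => if N ≤ n then W k n else 0 with hu
    have hind : ∀ n, ENNReal.ofReal |Set.indicator (Set.Ici N) (fun n => (X n).toReal) n|
        = ∑' k, u k n := by
      intro n
      by_cases hn : N ≤ n
      · rw [Set.indicator_of_mem (Set.mem_Ici.mpr hn), hofx n, hXdef]
        simp only [hu]
        exact tsum_congr fun k => (if_pos hn).symm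
      · rw [Set.indicator_of_notMem (fun hmem => hn (Set.mem_Ici.mp hmem))]
        simp only [hu, if_neg hn]
        simp
    have hle1 : hatPhi φ₁ (Set.indicator (Set.Ici N) (fun n => (X n).toReal))
        ≤ ∑' k, hat' φ₁ (u k) := by
      rw [hatPhi_eq_hat']
      have : (fun n => ENNReal.ofReal |Set.indicator (Set.Ici N)
          (fun n => (X n).toReal) n|) = fun n => ∑' k, u k n := funext hind
      rw [this]
      exact hat'_le_tsum φ₁ u
    refine hle1.trans ?_
    have hzero : ∀ k < K, hat' φ₁ (u k) = 0 := by
      intro k hk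
      have hMk : M k ≤ N := le_trans (Finset.le_sup (Finset.mem_range.mpr hk)) hN
      have : u k = fun _ => 0 := by
        funext n
        by_cases hn : N ≤ n
        · simp only [hu, if_pos hn, hW, hM k n (hMk.trans hn)]
          simp
        · simp [hu, if_neg hn]
      rw [this, hat'_zero]
    have hshift : ∑' k, hat' φ₁ (u k) = ∑' k, hat' φ₁ (u (k + K)) := by
      refine (Function.Injective.tsum_eq (add_left_injective K) ?_).symm
      intro k hk
      rcases le_or_gt K k with h' | h'
      · exact ⟨k - K, by simp; omega⟩
      · exact absurd (hzero k h') hk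
    rw [hshift]
    refine le_trans (ENNReal.tsum_le_tsum fun k => ?_) hKle
    calc hat' φ₁ (u (k + K)) ≤ hat' φ₁ (W (k + K)) := by
          refine hat'_mono φ₁ fun n => ?_
          simp only [hu]
          split <;> simp
      _ = 2⁻¹ ^ (k + K) := hhat1w (k + K)
  · -- hatPhi φ₂ x = ⊤
    have hofx : (fun n => ENNReal.ofReal |(X n).toReal|) = X := by
      funext n
      rw [abs_of_nonneg ENNReal.toReal_nonneg, ENNReal.ofReal_toReal (hXtop n)]
    have hbig : ∀ k : ℕ, (2:ℝ≥0∞) ^ (k+1) ≤ hatPhi φ₂ (fun n => (X n).toReal) := by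
      intro k
      refine (hhat2w k).trans ?_
      rw [hatPhi_eq_hat', hofx]
      exact hat'_mono φ₂ fun n => ENNReal.le_tsum k
    by_contra hne
    obtain ⟨n, hn⟩ := ENNReal.exists_nat_gt hne
    have hle : (n:ℝ≥0∞) ≤ 2 ^ (n+1) := by
      calc (n:ℝ≥0∞) ≤ 2 ^ n := by exact_mod_cast n.lt_two_pow_self.le
        _ ≤ 2 ^ (n+1) := pow_le_pow_right₀ one_le_two (Nat.le_succ n)
    exact absurd (hle.trans (hbig n)) (not_le.mpr hn)
end

section
/- Let A = (a_n) and B = (b_n) be Waterman sequences. If there exist positive m, M and a partition of ℕ into consecutive nonempty finite intervals (I_n) with m·a_n ≤ ∑_{i∈I_n} b_i ≤ M·a_n for all n, then there is η > 0 with ∑_{i=1}^n b_i ≤ η·∑_{i=1}^n a_i for all n. -/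
/-- If `ℕ` can be partitioned into consecutive nonempty finite intervals `I_n` (here
`I n = [k n, k (n+1))` with `k 0 = 0` and `k` strictly increasing) such that
`m·a_n ≤ ∑_{i∈I_n} b_i ≤ M·a_n` for all `n`, then the partial sums of the Waterman
sequence `b` are `O` of those of `a`. -/
theorem partial_sums_big_O_of_interval_partition (a b : ℕ → ℝ)
    (ha_pos : ∀ n, 0 < a n) (ha_mono : ∀ n, a (n + 1) ≤ a n)
    (ha_div : ¬ Summable a)
    (hb_pos : ∀ n, 0 < b n) (hb_mono : ∀ n, b (n + 1) ≤ b n)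
    (hb_div : ¬ Summable b)
    (m M : ℝ) (hm : 0 < m) (hM : 0 < M)
    (k : ℕ → ℕ) (hk0 : k 0 = 0) (hk : StrictMono k)
    (hlow : ∀ n, m * a n ≤ ∑ i ∈ Finset.Ico (k n) (k (n + 1)), b i)
    (hhigh : ∀ n, ∑ i ∈ Finset.Ico (k n) (k (n + 1)), b i ≤ M * a n) :
    ∃ η : ℝ, 0 < η ∧ ∀ n, ∑ i ∈ Finset.range n, b i ≤ η * ∑ i ∈ Finset.range n, a i := by
  have haux : ∀ N, ∑ i ∈ Finset.range (k N), b i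
      = ∑ j ∈ Finset.range N, ∑ i ∈ Finset.Ico (k j) (k (j + 1)), b i := by
    intro N
    induction N with
    | zero => simp [hk0]
    | succ N ih =>
        rw [Finset.sum_range_succ, ← ih, Finset.range_eq_Ico, Finset.range_eq_Ico]
        exact (Finset.sum_Ico_consecutive (f := b) (Nat.zero_le (k N)) (hk (Nat.lt_succ_self N)).le).symm
  refine ⟨2 * M, by positivity, fun n => ?_⟩
  rcases Nat.eq_zero_or_pos n with rfl | hn
  · simp
  set N := Nat.findGreatest (fun j => k j ≤ n) n with hNdef
  have hN1 : k N ≤ n := Nat.findGreatest_spec (P := fun j => k j ≤ n) (Nat.zero_le n)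
      (by simp [hk0])
  have hN2 : n < k (N + 1) := by
    by_contra h
    push_neg at h
    exact Nat.findGreatest_is_greatest (Nat.lt_succ_self N)
      (le_trans (hk.le_apply) h) h
  have hNn : N ≤ n := le_trans hk.le_apply hN1
  have ha_anti : ∀ i j : ℕ, i ≤ j → a j ≤ a i := by
    intro i j hij
    exact antitone_nat_of_succ_le ha_mono hij
  have hS : a 0 ≤ ∑ i ∈ Finset.range n, a i := by
    have := Finset.single_le_sum (f := a) (fun i _ => (ha_pos i).le)
      (Finset.mem_range.2 hn)
    exact this
  have hSN : ∑ j ∈ Finset.range N, a j ≤ ∑ i ∈ Finset.range n, a i :=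
    Finset.sum_le_sum_of_subset_of_nonneg (Finset.range_subset_range.2 hNn)
      (fun i _ _ => (ha_pos i).le)
  calc ∑ i ∈ Finset.range n, b i
      ≤ ∑ i ∈ Finset.range (k (N + 1)), b i :=
        Finset.sum_le_sum_of_subset_of_nonneg (Finset.range_subset_range.2 hN2.le)
          (fun i _ _ => (hb_pos i).le)
    _ = ∑ j ∈ Finset.range (N + 1), ∑ i ∈ Finset.Ico (k j) (k (j + 1)), b i := haux _
    _ ≤ ∑ j ∈ Finset.range (N + 1), M * a j :=
        Finset.sum_le_sum (fun j _ => hhigh j)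
    _ = M * (∑ j ∈ Finset.range N, a j + a N) := by
        rw [Finset.sum_range_succ, ← Finset.mul_sum]; ring
    _ ≤ M * (∑ i ∈ Finset.range n, a i + ∑ i ∈ Finset.range n, a i) := by
        have : a N ≤ ∑ i ∈ Finset.range n, a i := le_trans (ha_anti 0 N (Nat.zero_le N)) hS
        nlinarith [hSN]
    _ = 2 * M * ∑ i ∈ Finset.range n, a i := by ring
end

section
/- Let A = (a_n), B = (b_n) be Waterman sequences. Suppose there is no η with ∑_{i=1}^n b_i ≤ η ∑_{i=1}^n a_i for all n. Then for every M > 0 there exist k, l ∈ ℕ with ∑_{i=1}^k b_i ≥ M ∑_{i=1}^l a_i and b_k > M a_l. (Equivalently: if for some M > 0 the implication (∑_{i=1}^k b_i ≥ M ∑_{i=1}^l a_i ⟹ b_k ≤ M a_l) holds for all k, l, then ∑_{i=1}^n b_i = O(∑_{i=1}^n a_i).) -/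
/-- If the partial sums of the Waterman sequence `b` are not `O` of those of `a`, then for
every `M > 0` there are `k, l` with `∑_{i≤k} b_i ≥ M ∑_{i≤l} a_i` and `b_k > M·a_l`. -/
theorem katetov_witness_of_not_big_O (a b : ℕ → ℝ)
    (ha_pos : ∀ n, 0 < a n) (ha_mono : ∀ n, a (n + 1) ≤ a n)
    (ha_div : ¬ Summable a)
    (hb_pos : ∀ n, 0 < b n) (hb_mono : ∀ n, b (n + 1) ≤ b n)
    (hb_div : ¬ Summable b)
    (h : ∀ η : ℝ, ∃ n, η * ∑ i ∈ Finset.range n, a i < ∑ i ∈ Finset.range n, b i) :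
    ∀ M : ℝ, 0 < M → ∃ k l : ℕ,
      M * ∑ i ∈ Finset.range (l + 1), a i ≤ ∑ i ∈ Finset.range (k + 1), b i ∧
        M * a l < b k := by
  intro M hM
  by_contra hc
  push_neg at hc
  -- claim: ∀ n, ∑ b over range n ≤ 2M ∑ a over range n
  have claim : ∀ n, ∑ i ∈ Finset.range n, b i ≤ 2 * M * ∑ i ∈ Finset.range n, a i := by
    intro n
    induction n with
    | zero => simp
    | succ n ih =>
      by_cases hcase : M * ∑ i ∈ Finset.range (n + 1), a i ≤ ∑ i ∈ Finset.range (n + 1), b i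
      · have hbn : b n ≤ M * a n := hc n n hcase
        rw [Finset.sum_range_succ, Finset.sum_range_succ (f := a)]
        have : M * a n ≤ 2 * M * a n := by nlinarith [(ha_pos n)]
        linarith
      · push_neg at hcase
        have hsa : 0 ≤ ∑ i ∈ Finset.range (n + 1), a i :=
          Finset.sum_nonneg fun i _ => (ha_pos i).le
        nlinarith
  obtain ⟨n, hn⟩ := h (2 * M)
  exact absurd (claim n) (not_le.mpr hn)
end
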